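/- Fix h : ℕ, k ≥ 1, and intervals x_1, …, x_k with x_j = {m ∈ ℕ : a_j ≤ m < b_j} where a_j < b_j ≤ 2^h. Let p be a natural number with p ∈ ⋂_{j ∈ [k]} x_j. Then there is exactly one tuple (u_1, …, u_k) of bitstrings such that for every j ∈ [k], u_j ∈ CP_h(a_j, b_j) and p ∈ seg_h(u_j). -/

import Mathlib

/-! The nodes whose segment contains `p` are the prefixes of the leaf of `p`, so any two of them
are comparable under the prefix order; the minimality clause of `CP` therefore leaves at most one
of them in `CP h a b`, and the shortest prefix of the leaf whose segment lies in `[a, b)` is one. -/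

/-- The value of a bitstring (most significant bit first):
`val [] = 0` and `val (u ++ [b]) = 2 * val u + (if b then 1 else 0)`. -/
def bitVal (u : List Bool) : ℕ :=
  u.foldl (fun n b => 2 * n + (if b then 1 else 0)) 0

/-- The segment of a bitstring `u` (with `|u| ≤ h`) in the perfect segment tree of
height `h`: `seg_h(u) = {m : val u · 2^(h−|u|) ≤ m < (val u + 1) · 2^(h−|u|)}`. -/
def seg (h : ℕ) (u : List Bool) : Set ℕ :=
  {m | bitVal u * 2 ^ (h - u.length) ≤ m ∧ m < (bitVal u + 1) * 2 ^ (h - u.length)}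

/-- The canonical partition `CP_h(a, b)` of the interval `{m : a ≤ m < b}` in the
perfect segment tree of height `h`: the bitstrings `u` with `|u| ≤ h` whose segment is
contained in `[a, b)` and such that no proper prefix of `u` has its segment contained
in `[a, b)`. -/
def CP (h a b : ℕ) : Set (List Bool) :=
  {u | u.length ≤ h ∧ seg h u ⊆ Set.Ico a b ∧
    ∀ u' : List Bool, u' <+: u → u' ≠ u → ¬ seg h u' ⊆ Set.Ico a b}

lemma bitVal_nil : bitVal [] = 0 := rfl

lemma bitVal_concat (u : List Bool) (b : Bool) :
    bitVal (u ++ [b]) = 2 * bitVal u + (if b then 1 else 0) :=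
  List.foldl_concat _ _ _ _

lemma bitVal_append (u w : List Bool) :
    bitVal (u ++ w) = bitVal u * 2 ^ w.length + bitVal w := by
  induction w using List.reverseRecOn with
  | nil => simp [bitVal_nil]
  | append_singleton w b ih =>
    rw [← List.append_assoc, bitVal_concat, bitVal_concat, ih, List.length_append,
      List.length_singleton, pow_succ]
    ring

lemma bitVal_lt (u : List Bool) : bitVal u < 2 ^ u.length := by
  induction u using List.reverseRecOn with
  | nil => simp [bitVal_nil]
  | append_singleton u b ih =>
    rw [bitVal_concat, List.length_append, List.length_singleton, pow_succ]
    cases b <;> simp <;> omega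

lemma eq_of_bitVal_eq {u v : List Bool} (hlen : u.length = v.length)
    (hval : bitVal u = bitVal v) : u = v := by
  induction u using List.reverseRecOn generalizing v with
  | nil => exact (List.length_eq_zero_iff.mp hlen.symm).symm
  | append_singleton u b ih =>
    obtain rfl | ⟨v, c, rfl⟩ := v.eq_nil_or_concat
    · simp at hlen
    rw [List.concat_eq_append] at hlen hval ⊢
    rw [bitVal_concat, bitVal_concat] at hval
    simp only [List.length_append, List.length_singleton, Nat.add_right_cancel_iff] at hlen
    have hbc : b = c := by cases b <;> cases c <;> simp at hval ⊢ <;> omega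
    subst hbc
    rw [ih hlen (by cases b <;> simpa using hval)]

lemma exists_length_eq_bitVal_eq {l q : ℕ} (hq : q < 2 ^ l) :
    ∃ w : List Bool, w.length = l ∧ bitVal w = q := by
  induction l generalizing q with
  | zero => exact ⟨[], rfl, by simp_all [bitVal_nil]⟩
  | succ l ih =>
    obtain ⟨w, hlen, hval⟩ := ih (q := q / 2) (by rw [pow_succ] at hq; omega)
    refine ⟨w ++ [q % 2 == 1], by simp [hlen], ?_⟩
    rw [bitVal_concat, hval]
    rcases Nat.mod_two_eq_zero_or_one q with hq2 | hq2 <;> simp [hq2] <;> omega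

lemma mem_seg_iff {h p : ℕ} {u : List Bool} :
    p ∈ seg h u ↔ p / 2 ^ (h - u.length) = bitVal u := by
  have hc : 0 < 2 ^ (h - u.length) := by positivity
  change _ ∧ _ ↔ _
  rw [Nat.div_eq_iff hc, add_one_mul]
  generalize 2 ^ (h - u.length) = c at hc ⊢
  omega

lemma seg_subset_of_prefix {h : ℕ} {u v : List Bool} (huv : u <+: v) (hv : v.length ≤ h) :
    seg h v ⊆ seg h u := by
  obtain ⟨w, rfl⟩ := huv
  intro p hp
  rw [List.length_append] at hv
  rw [mem_seg_iff, List.length_append, bitVal_append] at hp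
  rw [mem_seg_iff]
  calc p / 2 ^ (h - u.length)
      = p / 2 ^ (h - (u.length + w.length)) / 2 ^ w.length := by
        rw [Nat.div_div_eq_div_mul, ← pow_add]; congr 2; omega
    _ = bitVal u := by
        rw [hp, mul_comm, Nat.mul_add_div (by positivity), Nat.div_eq_of_lt (bitVal_lt w),
          add_zero]

lemma eq_of_mem_seg_of_length_eq {h p : ℕ} {u v : List Bool} (hlen : u.length = v.length)
    (hu : p ∈ seg h u) (hv : p ∈ seg h v) : u = v := by
  rw [mem_seg_iff] at hu hv
  exact eq_of_bitVal_eq hlen (hu.symm.trans (hlen ▸ hv))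

lemma prefix_of_mem_seg {h p : ℕ} {u v : List Bool} (hlen : u.length ≤ v.length)
    (hv : v.length ≤ h) (hpu : p ∈ seg h u) (hpv : p ∈ seg h v) : u <+: v := by
  have htake : v.take u.length <+: v := List.take_prefix _ _
  have hp : p ∈ seg h (v.take u.length) := seg_subset_of_prefix htake hv hpv
  rwa [eq_of_mem_seg_of_length_eq (by simp [hlen]) hpu hp]

lemma eq_of_mem_CP_of_mem_seg {h a b p : ℕ} {u v : List Bool} (hu : u ∈ CP h a b)
    (hv : v ∈ CP h a b) (hpu : p ∈ seg h u) (hpv : p ∈ seg h v) : u = v := by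
  wlog hlen : u.length ≤ v.length generalizing u v
  · exact (this hv hu hpv hpu (le_of_not_ge hlen)).symm
  by_contra hne
  exact hv.2.2 u (prefix_of_mem_seg hlen hv.1 hpu hpv) hne hu.2.1

lemma exists_mem_CP_mem_seg {h a b p : ℕ} (hp : p ∈ Set.Ico a b) (hph : p < 2 ^ h) :
    ∃ u ∈ CP h a b, p ∈ seg h u := by
  classical
  obtain ⟨w, hlen, hval⟩ := exists_length_eq_bitVal_eq hph
  have hpw : p ∈ seg h w := by simp [mem_seg_iff, hlen, hval]
  have hex : ∃ l, seg h (w.take l) ⊆ Set.Ico a b := by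
    refine ⟨h, fun m hm => ?_⟩
    rw [← hlen, List.take_length, mem_seg_iff, hlen, Nat.sub_self, pow_zero, Nat.div_one,
      hval] at hm
    exact hm ▸ hp
  refine ⟨w.take (Nat.find hex), ⟨by simp [hlen], Nat.find_spec hex, ?_⟩,
    seg_subset_of_prefix (List.take_prefix _ _) hlen.le hpw⟩
  intro u hu hne
  have hlt : u.length < Nat.find hex := by
    have hle := hu.length_le
    have hne' : u.length ≠ (w.take (Nat.find hex)).length := fun heq => hne (hu.eq_of_length heq)
    simp only [List.length_take] at hle hne'
    omega
  rw [List.prefix_iff_eq_take.mp (List.prefix_take_iff.mp hu).1]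
  exact Nat.find_min hex hlt

lemma existsUnique_mem_CP_mem_seg {h a b p : ℕ} (hp : p ∈ Set.Ico a b) (hb : b ≤ 2 ^ h) :
    ∃! u, u ∈ CP h a b ∧ p ∈ seg h u := by
  obtain ⟨u, hu, hpu⟩ := exists_mem_CP_mem_seg hp (hp.2.trans_le hb)
  exact ⟨u, ⟨hu, hpu⟩, fun v hv => eq_of_mem_CP_of_mem_seg hv.1 hu hv.2 hpu⟩

theorem unique_tuple_of_canonical_nodes_containing_point_general
    (h k : ℕ) (a b : Fin k → ℕ)
    (hb : ∀ j, b j ≤ 2 ^ h)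
    (p : ℕ) (hp : ∀ j : Fin k, p ∈ Set.Ico (a j) (b j)) :
    ∃! u : Fin k → List Bool,
      ∀ j : Fin k, u j ∈ CP h (a j) (b j) ∧ p ∈ seg h (u j) := by
  have hunique j := existsUnique_mem_CP_mem_seg (hp j) (hb j)
  choose u hu using fun j => (hunique j).exists
  exact ⟨u, hu, fun v hv => funext fun j => (hunique j).unique (hv j) (hu j)⟩

/-- Fix `h`, `k ≥ 1`, and intervals `x j = {m : a j ≤ m < b j}` with
`a j < b j ≤ 2^h`. If the point `p` lies in every `x j`, then there is exactly one
tuple `(u 1, …, u k)` of bitstrings such that `u j ∈ CP_h(a j, b j)` and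
`p ∈ seg_h(u j)` for every `j`. -/
theorem unique_tuple_of_canonical_nodes_containing_point
    (h k : ℕ) (hk : 1 ≤ k) (a b : Fin k → ℕ)
    (hab : ∀ j, a j < b j) (hb : ∀ j, b j ≤ 2 ^ h)
    (p : ℕ) (hp : ∀ j : Fin k, p ∈ Set.Ico (a j) (b j)) :
    ∃! u : Fin k → List Bool,
      ∀ j : Fin k, u j ∈ CP h (a j) (b j) ∧ p ∈ seg h (u j) :=
  unique_tuple_of_canonical_nodes_containing_point_general h k a b hb p hp
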